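/- Define, for each positive integer n, a map g_{n,∞} from the free monoid on countably many generators {σ₁, σ₂, ...} to the free monoid on {τ₁,...,τ_{n+1}} by g_{n,∞}(σ_{ln+i}) = τ_{n+1}^l τ_i for i = 1,...,n and l ≥ 0. Then whenever n divides m, g_{n,m} ∘ g_{m,∞} = g_{n,∞} on all generators, where g_{n,m} is the homomorphism defined by g_{n,m}(σ_{nl+i}) = τ_{n+1}^l τ_i and g_{n,m}(σ_{m+1}) = τ_{n+1}^{m/n}. -/

import Mathlib

namespace CuntzEmbed17

/-- Image of `σ_{j+1}` (0-indexed `j : Fin (m+1)`) under `g_{n,m}` (`n ∣ m`). -/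
def gGen (n m : ℕ) (hn : 0 < n) (_h : n ∣ m) (j : Fin (m + 1)) :
    FreeMonoid (Fin (n + 1)) :=
  if j.val = m then (FreeMonoid.of ⟨n, Nat.lt_succ_self n⟩) ^ (m / n)
  else (FreeMonoid.of ⟨n, Nat.lt_succ_self n⟩) ^ (j.val / n) *
    FreeMonoid.of ⟨j.val % n, (Nat.mod_lt _ hn).trans (Nat.lt_succ_self n)⟩

/-- The homomorphism `g_{n,m}` between free monoids (for `n ∣ m`), defined by
`σ_{nl+i} ↦ τ_{n+1}^l τ_i` and `σ_{m+1} ↦ τ_{n+1}^{m/n}`. -/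
def g (n m : ℕ) (hn : 0 < n) (h : n ∣ m) :
    FreeMonoid (Fin (m + 1)) →* FreeMonoid (Fin (n + 1)) :=
  FreeMonoid.lift (gGen n m hn h)

/-- Image of the generator `σ_{j+1}` (0-indexed `j : ℕ`) of the free monoid
on countably many generators under `g_{n,∞}`: writing `j + 1 = ln + i` with
`l ≥ 0`, `1 ≤ i ≤ n`, it is `τ_{n+1}^l τ_i`. -/
def gInfGen (n : ℕ) (hn : 0 < n) (j : ℕ) : FreeMonoid (Fin (n + 1)) :=
  (FreeMonoid.of ⟨n, Nat.lt_succ_self n⟩) ^ (j / n) *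
    FreeMonoid.of ⟨j % n, (Nat.mod_lt _ hn).trans (Nat.lt_succ_self n)⟩

/-- The homomorphism `g_{n,∞}` from the free monoid on countably many
generators `σ₁, σ₂, …` to the free monoid on `τ₁, …, τ_{n+1}`. -/
def gInf (n : ℕ) (hn : 0 < n) : FreeMonoid ℕ →* FreeMonoid (Fin (n + 1)) :=
  FreeMonoid.lift (gInfGen n hn)

theorem _root_.Nat.div_eq_div_mul_add_mod_div_of_dvd {n m : ℕ} (h : n ∣ m) (j : ℕ) :
    j / n = m / n * (j / m) + j % m / n := by
  obtain ⟨k, rfl⟩ := h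
  rcases n.eq_zero_or_pos with rfl | hn
  · simp
  rw [Nat.mul_div_cancel_left _ hn, Nat.mod_mul_right_div_self, ← Nat.div_div_eq_div_mul,
    Nat.div_add_mod]

theorem gInf_of (n : ℕ) (hn : 0 < n) (j : ℕ) :
    gInf n hn (FreeMonoid.of j) = gInfGen n hn j :=
  FreeMonoid.lift_eval_of _ _

theorem g_of_last (n m : ℕ) (hn : 0 < n) (h : n ∣ m) :
    g n m hn h (FreeMonoid.of (Fin.last m)) = FreeMonoid.of ⟨n, n.lt_succ_self⟩ ^ (m / n) := by
  simp [g, gGen]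

theorem g_of_lt (n m : ℕ) (hn : 0 < n) (h : n ∣ m) {j : ℕ} (hj : j < m) :
    g n m hn h (FreeMonoid.of ⟨j, hj.trans m.lt_succ_self⟩) = gInfGen n hn j := by
  simp [g, gGen, gInfGen, hj.ne]

/-- Compatibility with the embeddings of `O_∞`: whenever `n ∣ m`,
`g_{n,m} ∘ g_{m,∞} = g_{n,∞}` on every generator. -/
theorem g_comp_gInf (n m : ℕ) (hn : 0 < n) (hm : 0 < m) (h : n ∣ m) (j : ℕ) :
    g n m hn h (gInf m hm (FreeMonoid.of j)) = gInf n hn (FreeMonoid.of j) := by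
  have hlast : (⟨m, m.lt_succ_self⟩ : Fin (m + 1)) = Fin.last m := rfl
  rw [gInf_of, gInf_of, gInfGen, map_mul, map_pow, hlast, g_of_last,
    g_of_lt n m hn h (j.mod_lt hm), gInfGen, gInfGen, ← pow_mul, ← mul_assoc, ← pow_add,
    ← Nat.div_eq_div_mul_add_mod_div_of_dvd h]
  simp only [Nat.mod_mod_of_dvd j h]

end CuntzEmbed17
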